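/- (Overshooting case of the fixed-stepsize analysis.) Suppose g is μ-sharp on 𝒳 with 𝒳* nonempty, fix L with 0 < μ ≤ L, set τ = μ/L, and fix α with 0 < α < τ·μ/ρ. Define E* = ( αL/(μ + √(μ² − αρL)) )². Let x ∈ 𝒯₁ satisfy dist²(x, 𝒳*) < E*, let ζ ≠ 0 be a weak subgradient of g at x with ‖ζ‖ ≤ L, and set x⁺ = proj_𝒳( x − α·ζ/‖ζ‖ ). Then dist²(x⁺, 𝒳*) ≤ E* + 2α². -/

import Mathlib

/-! For every `x̄ ∈ 𝒳*`, nonexpansiveness of the projection, the weak subgradient inequality at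
`x` tested at `x̄`, and sharpness give, with `s = α / ‖ζ‖`,
`‖x⁺ - x̄‖² ≤ (1 + sρ)‖x - x̄‖² - 2sμ·dist(x, 𝒳*) + α²`.
Letting `‖x - x̄‖` decrease to `dist(x, 𝒳*)` and using `ρ·dist(x, 𝒳*) < μ` on the tube turns
this into `dist²(x⁺, 𝒳*) ≤ dist²(x, 𝒳*) + α² < E* + α²`. -/

open scoped InnerProductSpace

open Metric

theorem le_apply_infDist_of_forall_mem {α : Type*} [PseudoMetricSpace α] {S : Set α}
    (hS : S.Nonempty) {φ : ℝ → ℝ} (hφ : Continuous φ) {c : ℝ} {x : α}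
    (h : ∀ y ∈ S, c ≤ φ (dist x y)) : c ≤ φ (infDist x S) := by
  have hclosed : IsClosed {r | c ≤ φ r} := isClosed_le continuous_const hφ
  refine hclosed.closure_subset_iff.mpr ?_ ((isGLB_infDist hS).mem_closure (hS.image _))
  rintro _ ⟨y, hy, rfl⟩
  exact h y hy

section

variable {E : Type*} [NormedAddCommGroup E] [InnerProductSpace ℝ E]

def IsWeakSubgradient (ρ : ℝ) (g : E → ℝ) (x ζ : E) : Prop :=
  ∀ y, g x + ⟪ζ, y - x⟫_ℝ - ρ / 2 * ‖y - x‖ ^ 2 ≤ g y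

theorem IsWeakSubgradient.sub_sub_le_inner {ρ : ℝ} {g : E → ℝ} {x ζ : E}
    (hζ : IsWeakSubgradient ρ g x ζ) (y : E) :
    g x - g y - ρ / 2 * ‖x - y‖ ^ 2 ≤ ⟪ζ, x - y⟫_ℝ := by
  have h := hζ y
  rw [← neg_sub x y, inner_neg_right, norm_neg] at h
  linarith

theorem Convex.norm_sub_le_of_isNearest {X : Set E} (hX : Convex ℝ X) {z p w : E}
    (hp : p ∈ X) (hnearest : ∀ y ∈ X, dist z p ≤ dist z y) (hw : w ∈ X) :
    ‖p - w‖ ≤ ‖z - w‖ := by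
  have hinf : ‖z - p‖ = ⨅ y : X, ‖z - y‖ := by
    have : Nonempty X := ⟨⟨p, hp⟩⟩
    refine le_antisymm (le_ciInf fun y ↦ ?_) (ciInf_le (f := fun y : X ↦ ‖z - y‖) ⟨0, ?_⟩ ⟨p, hp⟩)
    · simpa only [dist_eq_norm] using hnearest y y.2
    · rintro _ ⟨y, rfl⟩
      exact norm_nonneg _
  have hinner := (norm_eq_iInf_iff_real_inner_le_zero hX hp).mp hinf w hw
  have hexpand : ‖z - w‖ ^ 2 = ‖z - p‖ ^ 2 - 2 * ⟪z - p, w - p⟫_ℝ + ‖p - w‖ ^ 2 := by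
    rw [show z - w = (z - p) - (w - p) by abel, norm_sub_sq_real, norm_sub_rev w p]
  nlinarith [norm_nonneg (p - w), norm_nonneg (z - w), sq_nonneg ‖z - p‖]

theorem norm_sub_div_norm_smul_sub_sq {ζ : E} (hζ : ζ ≠ 0) (α : ℝ) (x y : E) :
    ‖x - (α / ‖ζ‖) • ζ - y‖ ^ 2 = ‖x - y‖ ^ 2 - 2 * (α / ‖ζ‖) * ⟪ζ, x - y⟫_ℝ + α ^ 2 := by
  have hζn : ‖ζ‖ ≠ 0 := norm_ne_zero_iff.mpr hζ
  rw [show x - (α / ‖ζ‖) • ζ - y = (x - y) - (α / ‖ζ‖) • ζ by abel, norm_sub_sq_real,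
    real_inner_smul_right, real_inner_comm, norm_smul, Real.norm_eq_abs, mul_pow, sq_abs,
    div_pow, div_mul_cancel₀ _ (pow_ne_zero 2 hζn)]
  ring

theorem infDist_sq_le_of_projected_normalized_step {g : E → ℝ} {μ ρ α gstar : ℝ} {X S : Set E}
    (hXcv : Convex ℝ X) (hSX : S ⊆ X) (hS : S.Nonempty) (hgS : ∀ z ∈ S, g z = gstar)
    {x ζ xp : E} (hsharp : μ * infDist x S ≤ g x - gstar) (htube : ρ * infDist x S ≤ 2 * μ)
    (hα : 0 ≤ α) (hζ0 : ζ ≠ 0) (hζ : IsWeakSubgradient ρ g x ζ) (hxpX : xp ∈ X)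
    (hxp : ∀ y ∈ X, dist (x - (α / ‖ζ‖) • ζ) xp ≤ dist (x - (α / ‖ζ‖) • ζ) y) :
    infDist xp S ^ 2 ≤ infDist x S ^ 2 + α ^ 2 := by
  set D := infDist x S
  set s := α / ‖ζ‖
  have hs : 0 ≤ s := by positivity
  have hpoint : ∀ y ∈ S, infDist xp S ^ 2 ≤ (1 + s * ρ) * dist x y ^ 2 - 2 * s * μ * D + α ^ 2 := by
    intro y hy
    have hinner : μ * D - ρ / 2 * ‖x - y‖ ^ 2 ≤ ⟪ζ, x - y⟫_ℝ := by
      have := hζ.sub_sub_le_inner y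
      rw [hgS y hy] at this
      linarith
    calc infDist xp S ^ 2 ≤ ‖xp - y‖ ^ 2 := by
          rw [← dist_eq_norm]
          gcongr
          · exact infDist_nonneg
          · exact infDist_le_dist_of_mem hy
      _ ≤ ‖x - s • ζ - y‖ ^ 2 := by gcongr; exact hXcv.norm_sub_le_of_isNearest hxpX hxp (hSX hy)
      _ = ‖x - y‖ ^ 2 - 2 * s * ⟪ζ, x - y⟫_ℝ + α ^ 2 := norm_sub_div_norm_smul_sub_sq hζ0 α x y
      _ ≤ (1 + s * ρ) * dist x y ^ 2 - 2 * s * μ * D + α ^ 2 := by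
          rw [dist_eq_norm]
          nlinarith [mul_le_mul_of_nonneg_left hinner hs]
  have hD := le_apply_infDist_of_forall_mem hS
    (φ := fun r ↦ (1 + s * ρ) * r ^ 2 - 2 * s * μ * D + α ^ 2) (by fun_prop) hpoint
  have hD0 : 0 ≤ D := infDist_nonneg
  nlinarith [mul_nonneg (mul_nonneg hs hD0) (sub_nonneg.mpr htube)]

end

theorem overshooting_case_general
    {d : ℕ}
    (g : EuclideanSpace ℝ (Fin d) → ℝ) (μ ρ α : ℝ)
    (hμ : 0 < μ) (hρ : 0 < ρ)
    (hα : 0 < α)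
    (X Xstar : Set (EuclideanSpace ℝ (Fin d)))
    (hXcv : Convex ℝ X)
    (hXstar : Xstar = {x | x ∈ X ∧ ∀ y ∈ X, g x ≤ g y})
    (hXstarNe : Xstar.Nonempty)
    -- `gstar` is the minimal value of `g` over `X`
    (gstar : ℝ) (hgstar : ∀ z ∈ Xstar, g z = gstar)
    -- sharpness
    (hsharp : ∀ x ∈ X, μ * Metric.infDist x Xstar ≤ g x - gstar)
    -- the threshold `E*`
    (Estar : ℝ)
    -- `x` lies in the tube `𝒯₁` and below the threshold
    (x : EuclideanSpace ℝ (Fin d)) (hxX : x ∈ X)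
    (hxtube : Metric.infDist x Xstar < μ / ρ)
    (hxE : Metric.infDist x Xstar ^ 2 < Estar)
    -- `ζ ≠ 0` is a weak subgradient of `g` at `x` with `‖ζ‖ ≤ L`
    (ζ : EuclideanSpace ℝ (Fin d)) (hζ0 : ζ ≠ 0)
    (hζ : ∀ y, g x + ⟪ζ, y - x⟫_ℝ - ρ / 2 * ‖y - x‖ ^ 2 ≤ g y)
    -- `xp` is the projection onto `X` of the normalized subgradient step
    (xp : EuclideanSpace ℝ (Fin d)) (hxpX : xp ∈ X)
    (hxp : ∀ y ∈ X, dist (x - (α / ‖ζ‖) • ζ) xp ≤ dist (x - (α / ‖ζ‖) • ζ) y) :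
    Metric.infDist xp Xstar ^ 2 ≤ Estar + 2 * α ^ 2 := by
  have hxρ : ρ * Metric.infDist x Xstar < μ := (lt_div_iff₀' hρ).mp hxtube
  have hstep := infDist_sq_le_of_projected_normalized_step hXcv
    (by rw [hXstar]; exact fun z hz ↦ hz.1) hXstarNe hgstar
    (hsharp x hxX) (by linarith) hα.le hζ0 hζ hxpX hxp
  linarith [sq_nonneg α]

/-- **Overshooting case of the fixed-stepsize analysis.**
If `g` is `μ`-sharp on `X` with nonempty solution set `Xstar`, `0 < μ ≤ L`, `τ = μ/L`,
`0 < α < τμ/ρ`, `E* = (αL/(μ + √(μ² - αρL)))²`, `x ∈ 𝒯₁` satisfies `dist²(x, Xstar) < E*`,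
`ζ ≠ 0` is a weak subgradient of `g` at `x` with `‖ζ‖ ≤ L`, and
`x⁺ = proj_X(x - α·ζ/‖ζ‖)`, then `dist²(x⁺, Xstar) ≤ E* + 2α²`. -/
theorem overshooting_case
    {d : ℕ} (hd : 1 ≤ d)
    (g : EuclideanSpace ℝ (Fin d) → ℝ) (μ ρ L α : ℝ)
    (hμ : 0 < μ) (hρ : 0 < ρ) (hμL : μ ≤ L)
    (hα : 0 < α) (hα' : α < (μ / L) * (μ / ρ))
    (X Xstar : Set (EuclideanSpace ℝ (Fin d)))
    (hXne : X.Nonempty) (hXcl : IsClosed X) (hXcv : Convex ℝ X)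
    (hXstar : Xstar = {x | x ∈ X ∧ ∀ y ∈ X, g x ≤ g y})
    (hXstarNe : Xstar.Nonempty)
    -- `gstar` is the minimal value of `g` over `X`
    (gstar : ℝ) (hgstar : ∀ z ∈ Xstar, g z = gstar)
    -- sharpness
    (hsharp : ∀ x ∈ X, μ * Metric.infDist x Xstar ≤ g x - gstar)
    -- the threshold `E*`
    (Estar : ℝ) (hEstar : Estar = (α * L / (μ + Real.sqrt (μ ^ 2 - α * ρ * L))) ^ 2)
    -- `x` lies in the tube `𝒯₁` and below the threshold
    (x : EuclideanSpace ℝ (Fin d)) (hxX : x ∈ X)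
    (hxtube : Metric.infDist x Xstar < μ / ρ)
    (hxE : Metric.infDist x Xstar ^ 2 < Estar)
    -- `ζ ≠ 0` is a weak subgradient of `g` at `x` with `‖ζ‖ ≤ L`
    (ζ : EuclideanSpace ℝ (Fin d)) (hζ0 : ζ ≠ 0) (hζL : ‖ζ‖ ≤ L)
    (hζ : ∀ y, g x + ⟪ζ, y - x⟫_ℝ - ρ / 2 * ‖y - x‖ ^ 2 ≤ g y)
    -- `xp` is the projection onto `X` of the normalized subgradient step
    (xp : EuclideanSpace ℝ (Fin d)) (hxpX : xp ∈ X)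
    (hxp : ∀ y ∈ X, dist (x - (α / ‖ζ‖) • ζ) xp ≤ dist (x - (α / ‖ζ‖) • ζ) y) :
    Metric.infDist xp Xstar ^ 2 ≤ Estar + 2 * α ^ 2 :=
  overshooting_case_general g μ ρ α hμ hρ hα X Xstar hXcv hXstar hXstarNe gstar hgstar hsharp Estar
    x hxX hxtube hxE ζ hζ0 hζ xp hxpX hxp
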